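/- For integers m ≥ 0 and z ≠ 0, the derivative recurrence ∂_z 𝐃_m(z) = 𝐃_{m+1}(z) − 𝐅_m(z)/z holds. -/

import Mathlib

open Complex

/-- The digamma function `ψ = Γ'/Γ`. -/
noncomputable def digamma (z : ℂ) : ℂ := deriv Complex.Gamma z / Complex.Gamma z

/-- The normalized ₀F₁ function with integer parameter: `𝐅_m(z) = ∑ zⁿ/((m+n)!·n!)`. -/
noncomputable def Fm (m : ℕ) (z : ℂ) : ℂ :=
  ∑' n : ℕ, z ^ n / ((m + n).factorial * n.factorial)

/-- `𝐃_m(z) = ∑_{k=1}^m (−1)^{k−1}(k−1)!/(m−k)!·z^{−k}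
      − ∑_{k≥0} (ψ(k+1)+ψ(k+m+1))/(k!(m+k)!)·z^k`. -/
noncomputable def Dm (m : ℕ) (z : ℂ) : ℂ :=
  (∑ k ∈ Finset.Icc 1 m,
      (-1 : ℂ) ^ (k - 1) * (k - 1).factorial / (m - k).factorial * z ^ (-(k : ℤ)))
  - ∑' k : ℕ, (_root_.digamma (k + 1) + _root_.digamma (k + m + 1)) / (k.factorial * (m + k).factorial) * z ^ k

/-!
Split `𝐃_m` into its principal part `∑ a_{m,k} z^{-k}` and its entire part `∑ c_{m,k} z^k`.
Since `-k · a_{m,k} = a_{m+1,k+1}`, differentiating the principal part gives the principal part of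
`𝐃_{m+1}` minus its leading term `1/(m! z)`. Differentiating the entire part termwise, the
recurrence `ψ(s+1) = ψ(s) + 1/s` gives `(j+1) c_{m,j+1} = c_{m+1,j} + 1/((m+j+1)! (j+1)!)`, and
the last terms sum to `(𝐅_m(z) - 1/m!)/z`.
-/

open Nat

local notation "ψ" => Complex.digamma

theorem summable_norm_mul_pow_of_norm_le_div_factorial {a : ℕ → ℂ} {C c : ℝ}
    (ha : ∀ n, ‖a n‖ ≤ C * c ^ n / n !) (r : ℝ) : Summable fun n => ‖a n‖ * r ^ n := by
  refine .of_norm_bounded ((Real.summable_pow_div_factorial (c * |r|)).mul_left C) fun n => ?_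
  calc ‖‖a n‖ * r ^ n‖ = ‖a n‖ * |r| ^ n := by simp
    _ ≤ C * c ^ n / n ! * |r| ^ n := by gcongr; exact ha n
    _ = C * ((c * |r|) ^ n / n !) := by ring

theorem summable_mul_pow_of_summable_norm {a : ℕ → ℂ} {z : ℂ}
    (ha : Summable fun n => ‖a n‖ * ‖z‖ ^ n) : Summable fun n => a n * z ^ n :=
  .of_norm_bounded ha fun n => by rw [norm_mul, norm_pow]

theorem tsum_mul_pow_eq_add_mul {a : ℕ → ℂ} {z : ℂ} (h : Summable fun n => a n * z ^ n) :
    ∑' n, a n * z ^ n = a 0 + z * ∑' n, a (n + 1) * z ^ n := by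
  rw [h.tsum_eq_zero_add, ← tsum_mul_left]
  simp only [pow_zero, mul_one, pow_succ]
  congr 1
  exact tsum_congr fun n => by ring

theorem hasDerivAt_tsum_mul_pow {a : ℕ → ℂ} (ha : ∀ r : ℝ, Summable fun n => ‖a n‖ * r ^ n)
    (z : ℂ) : HasDerivAt (fun x => ∑' n, a n * x ^ n) (∑' n, a (n + 1) * (n + 1) * z ^ n) z := by
  set R := ‖z‖ + 1
  have hR : 1 ≤ R := by simp [R]
  have hz : z ∈ Metric.ball 0 R := by simp [R]
  have hbound : ∀ n (y : ℂ), y ∈ Metric.ball 0 R →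
      ‖a n * (n * y ^ (n - 1))‖ ≤ ‖a n‖ * (2 * R) ^ n := by
    intro n y hy
    rw [mem_ball_zero_iff] at hy
    rw [norm_mul, norm_mul, norm_pow, Complex.norm_natCast, mul_pow]
    gcongr ‖a n‖ * ?_
    have hn : (n : ℝ) ≤ 2 ^ n := by exact_mod_cast n.lt_two_pow_self.le
    have hy' : ‖y‖ ^ (n - 1) ≤ R ^ n :=
      (pow_le_pow_left₀ (norm_nonneg y) hy.le _).trans (pow_le_pow_right₀ hR (n.sub_le 1))
    gcongr
  have hderiv := hasDerivAt_tsum_of_isPreconnected (ha (2 * R)) Metric.isOpen_ball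
    (convex_ball 0 R).isPreconnected (fun n y _ => (hasDerivAt_pow n y).const_mul (a n)) hbound
    hz (summable_mul_pow_of_summable_norm (ha ‖z‖)) hz
  have hsum : Summable fun n => a n * (n * z ^ (n - 1)) :=
    .of_norm_bounded (ha (2 * R)) fun n => hbound n z hz
  rw [hsum.tsum_eq_zero_add] at hderiv
  simpa [mul_assoc] using hderiv

theorem Finset.sum_Icc_one_succ {M : Type*} [AddCommMonoid M] (f : ℕ → M) (m : ℕ) :
    ∑ k ∈ Finset.Icc 1 (m + 1), f k = f 1 + ∑ k ∈ Finset.Icc 1 m, f (k + 1) := by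
  induction m with
  | zero => simp
  | succ m ih =>
    rw [Finset.sum_Icc_succ_top (by omega), ih, Finset.sum_Icc_succ_top (by omega), add_assoc]

theorem Complex.natCast_add_one_ne_neg_natCast (n m : ℕ) : (n : ℂ) + 1 ≠ -m := by
  exact_mod_cast (by omega : (n + 1 : ℤ) ≠ -m)

theorem Complex.digamma_natCast_succ_add_one (n : ℕ) :
    ψ ((n + 1 : ℕ) + 1) = ψ (n + 1) + ((n : ℂ) + 1)⁻¹ := by
  rw [Nat.cast_succ, digamma_apply_add_one _ (natCast_add_one_ne_neg_natCast n)]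

theorem Complex.norm_digamma_natCast_add_one_le (n : ℕ) : ‖ψ (n + 1)‖ ≤ ‖ψ 1‖ + n := by
  induction n with
  | zero => simp
  | succ n ih =>
    have hinv : ‖((n : ℂ) + 1)⁻¹‖ ≤ 1 := by
      rw [norm_inv, ← Nat.cast_add_one, Complex.norm_natCast]
      exact inv_le_one_of_one_le₀ (by simp)
    rw [digamma_natCast_succ_add_one]
    calc _ ≤ ‖ψ (n + 1)‖ + ‖((n : ℂ) + 1)⁻¹‖ := norm_add_le _ _
      _ ≤ ‖ψ 1‖ + n + 1 := by linarith
      _ = _ := by push_cast; ring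

namespace Fm

noncomputable def coeff (m n : ℕ) : ℂ := ((m + n)! * n ! : ℂ)⁻¹

theorem eq_tsum_coeff_mul_pow (m : ℕ) (z : ℂ) : Fm m z = ∑' n, coeff m n * z ^ n :=
  tsum_congr fun n => by rw [coeff, div_eq_inv_mul]

theorem norm_coeff_le (m n : ℕ) : ‖coeff m n‖ ≤ (n ! : ℝ)⁻¹ := by
  rw [coeff, norm_inv, norm_mul, Complex.norm_natCast, Complex.norm_natCast]
  gcongr
  exact le_mul_of_one_le_left (by positivity) (by exact_mod_cast (m + n).factorial_pos)

theorem eq_add_mul_tsum (m : ℕ) (z : ℂ) :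
    Fm m z = (m ! : ℂ)⁻¹ + z * ∑' n, coeff m (n + 1) * z ^ n := by
  rw [eq_tsum_coeff_mul_pow, tsum_mul_pow_eq_add_mul (summable_mul_pow_of_summable_norm
    (summable_norm_mul_pow_of_norm_le_div_factorial (C := 1) (c := 1)
    (fun n => by simpa using norm_coeff_le m n) _))]
  simp [coeff]

end Fm

namespace Dm

noncomputable def principalCoeff (m k : ℕ) : ℂ := (-1) ^ (k - 1) * (k - 1)! / (m - k)!

noncomputable def seriesCoeff (m k : ℕ) : ℂ :=
  (ψ (k + 1) + ψ (k + m + 1)) / (k ! * (m + k)!)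

noncomputable def principalPart (m : ℕ) (z : ℂ) : ℂ :=
  ∑ k ∈ Finset.Icc 1 m, principalCoeff m k * z ^ (-(k : ℤ))

noncomputable def seriesPart (m : ℕ) (z : ℂ) : ℂ := ∑' k, seriesCoeff m k * z ^ k

-- `rfl` because `digamma` above unfolds to `Complex.digamma = logDeriv Gamma`.
theorem eq_principalPart_sub_seriesPart (m : ℕ) : Dm m = principalPart m - seriesPart m := rfl

theorem principalCoeff_succ_succ (m : ℕ) {k : ℕ} (hk : 1 ≤ k) :
    principalCoeff (m + 1) (k + 1) = -k * principalCoeff m k := by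
  obtain ⟨j, rfl⟩ := Nat.exists_eq_add_of_le' hk
  simp only [principalCoeff, Nat.add_sub_cancel, Nat.add_sub_add_right, factorial_succ]
  push_cast
  ring

theorem hasDerivAt_principalPart (m : ℕ) {z : ℂ} (hz : z ≠ 0) :
    HasDerivAt (principalPart m) (principalPart (m + 1) z - (m ! * z)⁻¹) z := by
  have h : HasDerivAt (principalPart m) _ z := HasDerivAt.fun_sum fun k _ =>
    (hasDerivAt_zpow (-k) z (Or.inl hz)).const_mul (principalCoeff m k)
  refine h.congr_deriv ?_
  have hfirst : principalCoeff (m + 1) 1 * z ^ (-((1 : ℕ) : ℤ)) = (m ! * z)⁻¹ := by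
    simp [principalCoeff, mul_comm]
  rw [principalPart, Finset.sum_Icc_one_succ, hfirst, add_sub_cancel_left]
  refine Finset.sum_congr rfl fun k hk => ?_
  rw [principalCoeff_succ_succ m (Finset.mem_Icc.mp hk).1]
  push_cast
  ring_nf

theorem seriesCoeff_succ_mul (m j : ℕ) :
    seriesCoeff m (j + 1) * (j + 1) = seriesCoeff (m + 1) j + Fm.coeff m (j + 1) := by
  have hψ : ψ ((j + 1 : ℕ) + m + 1) = ψ ((j + m : ℕ) + 1) + (((j + m : ℕ) : ℂ) + 1)⁻¹ := by
    rw [← Complex.digamma_natCast_succ_add_one]; congr 1; push_cast; ring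
  have hψ' : ψ (j + (m + 1 : ℕ) + 1) = ψ ((j + m : ℕ) + 1) + (((j + m : ℕ) : ℂ) + 1)⁻¹ := by
    rw [← Complex.digamma_natCast_succ_add_one]; congr 1; push_cast; ring
  simp only [seriesCoeff, Fm.coeff, Complex.digamma_natCast_succ_add_one, hψ, hψ',
    show m + (j + 1) = j + m + 1 by omega, show m + 1 + j = j + m + 1 by omega,
    factorial_succ]
  push_cast
  field_simp
  ring

theorem norm_seriesCoeff_le (m k : ℕ) :
    ‖seriesCoeff m k‖ ≤ (2 * ‖ψ 1‖ + m + 2) * 2 ^ k / k ! := by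
  have hψk := Complex.norm_digamma_natCast_add_one_le k
  have hψkm : ‖ψ (k + m + 1)‖ ≤ ‖ψ 1‖ + (k + m) := by
    simpa using Complex.norm_digamma_natCast_add_one_le (k + m)
  have hk : (k : ℝ) + 1 ≤ 2 ^ k := by exact_mod_cast k.lt_two_pow_self
  have hnum : ‖ψ (k + 1) + ψ (k + m + 1)‖ ≤ (2 * ‖ψ 1‖ + m + 2) * 2 ^ k := by
    have : (1 : ℝ) ≤ 2 ^ k := one_le_pow₀ one_le_two
    nlinarith [norm_add_le (ψ (k + 1)) (ψ (k + m + 1)), norm_nonneg (ψ 1), m.cast_nonneg (α := ℝ)]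
  have hden : (k ! : ℝ) ≤ k ! * (m + k)! :=
    le_mul_of_one_le_right (by positivity) (by exact_mod_cast (m + k).factorial_pos)
  rw [seriesCoeff, norm_div, norm_mul, Complex.norm_natCast, Complex.norm_natCast]
  exact div_le_div₀ (by positivity) hnum (by positivity) hden

theorem summable_norm_seriesCoeff_mul_pow (m : ℕ) (r : ℝ) :
    Summable fun k => ‖seriesCoeff m k‖ * r ^ k :=
  summable_norm_mul_pow_of_norm_le_div_factorial (norm_seriesCoeff_le m) r

theorem hasDerivAt_seriesPart (m : ℕ) (z : ℂ) :
    HasDerivAt (seriesPart m) (seriesPart (m + 1) z + ∑' n, Fm.coeff m (n + 1) * z ^ n) z := by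
  have hF : Summable fun n => Fm.coeff m (n + 1) * z ^ n :=
    summable_mul_pow_of_summable_norm <| summable_norm_mul_pow_of_norm_le_div_factorial
      (C := 1) (c := 1) (fun n => by
        simpa using (Fm.norm_coeff_le m (n + 1)).trans (by gcongr; exact n.le_succ)) _
  have hS := summable_mul_pow_of_summable_norm (summable_norm_seriesCoeff_mul_pow (m + 1) ‖z‖)
  refine (hasDerivAt_tsum_mul_pow (summable_norm_seriesCoeff_mul_pow m) z).congr_deriv ?_
  rw [seriesPart, ← hS.tsum_add hF]
  exact tsum_congr fun n => by rw [seriesCoeff_succ_mul, add_mul]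

end Dm

theorem Dm_deriv_recurrence (m : ℕ) (z : ℂ) (hz : z ≠ 0) :
    deriv (Dm m) z = Dm (m + 1) z - Fm m z / z := by
  have hD := (Dm.hasDerivAt_principalPart m hz).sub (Dm.hasDerivAt_seriesPart m z)
  simp only [Dm.eq_principalPart_sub_seriesPart, hD.deriv, Pi.sub_apply, Fm.eq_add_mul_tsum]
  field_simp
  ring
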